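/- arXiv:2407.18429 — 4 statements merged into one kernel-verified Lean document; each statement's English description precedes it below -/
import Mathlib

section
/- The Hodge bundle is the unique congruence theta characteristic (group-theoretic form): Let N₁, N₂ be positive integers with gcd(N₁,N₂) odd and lcm(N₁,N₂) ≥ 5, and let Γ = Γ₁(N₁) ⊓ Γ(N₂) ≤ SL(2,ℤ). Suppose Γ' ≤ SL(2,ℤ) is a subgroup such that: (i) −I ∉ Γ'; (ii) {±A : A ∈ Γ'} = {±A : A ∈ Γ}; (iii) every parabolic element of Γ lies in Γ', i.e., every γ ∈ Γ with γ ≠ 1 and trace(γ) ∈ {2, −2} belongs to Γ' (so Γ' is a hyperbolic projective lift of Γ); and (iv) Γ' is a congruence subgroup, i.e., Γ(M) ≤ Γ' for some positive integer M. Then Γ' = Γ. -/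
open Matrix MatrixGroups CongruenceSubgroup

instance : Fact (Even (Fintype.card (Fin 2))) := ⟨⟨1, rfl⟩⟩

/-- The set `{±A : A ∈ S}` of a set of matrices together with its negatives, i.e. the
preimage of the image of `S` in `PSL(2,ℤ)`. -/
def pmSet (S : Set SL(2, ℤ)) : Set SL(2, ℤ) := {A | A ∈ S ∨ -A ∈ S}

/-!
Let `U` be the subgroup generated by the unipotent (trace `2`) elements of
`Γ = Γ₁(N₁) ⊓ Γ(N₂)`. Then `U ⊔ Γ(M) = Γ` for every `M ≥ 1`. Indeed, dividing `h ∈ Γ` by the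
upper unipotent with the same top-right entry lands in `Γ(lcm N₁ N₂)`, and for every prime `p`
the subgroup `Γ(m)` is covered by its own unipotents modulo `Γ(m p)`: for `p ∤ m` because
`SL(2, 𝔽_p)` is generated by elementary matrices, for `p ∣ m` because `1 + m X ↦ X mod p` turns
`Γ(m) / Γ(m p)` into the trace-zero matrices, which are spanned by the nilpotent directions of
three unipotents. A congruence lift `Γ'` therefore contains `U` and `Γ(M)`, hence `Γ`; and
`A ∈ Γ'` with `-A ∈ Γ ≤ Γ'` would put `-1` in `Γ'`.
-/

theorem Subgroup.mem_sup_of_inv_mul_mem {G : Type*} [Group G] {H K : Subgroup G} {q h : G}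
    (hq : q ∈ H) (hqh : q⁻¹ * h ∈ K) : h ∈ H ⊔ K := by
  simpa using Subgroup.mul_mem_sup hq hqh

namespace Matrix.SpecialLinearGroup

variable {R S : Type*} [CommRing R] [CommRing S]

def upperUnipotent (b : R) : SL(2, R) := ⟨!![1, b; 0, 1], by simp⟩

def lowerUnipotent (c : R) : SL(2, R) := ⟨!![1, 0; c, 1], by simp⟩

-- the unipotent stabiliser of the cusp `-1`
def negOneUnipotent (k : R) : SL(2, R) :=
  ⟨!![1 + k, k; -k, 1 - k], by simp [det_fin_two_of]; ring⟩

@[simp]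
theorem coe_upperUnipotent (b : R) :
    (upperUnipotent b : Matrix (Fin 2) (Fin 2) R) = !![1, b; 0, 1] :=
  rfl

@[simp]
theorem coe_lowerUnipotent (c : R) :
    (lowerUnipotent c : Matrix (Fin 2) (Fin 2) R) = !![1, 0; c, 1] :=
  rfl

@[simp]
theorem coe_negOneUnipotent (k : R) :
    (negOneUnipotent k : Matrix (Fin 2) (Fin 2) R) = !![1 + k, k; -k, 1 - k] :=
  rfl

@[simp]
theorem map_upperUnipotent (f : R →+* S) (b : R) :
    map f (upperUnipotent b) = upperUnipotent (f b) := by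
  ext i j; fin_cases i <;> fin_cases j <;> simp

@[simp]
theorem map_lowerUnipotent (f : R →+* S) (c : R) :
    map f (lowerUnipotent c) = lowerUnipotent (f c) := by
  ext i j; fin_cases i <;> fin_cases j <;> simp

@[simp]
theorem lowerUnipotent_zero : lowerUnipotent (0 : R) = 1 := by
  ext i j; fin_cases i <;> fin_cases j <;> simp

theorem lowerUnipotent_mul_lowerUnipotent (a b : R) :
    lowerUnipotent a * lowerUnipotent b = lowerUnipotent (a + b) := by
  ext i j; fin_cases i <;> fin_cases j <;> simp

section Field

variable {F : Type*} [Field F]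

theorem exists_eq_upper_mul_lower_mul_upper {g : SL(2, F)} (hg : g 1 0 ≠ 0) :
    ∃ b c d : F, g = upperUnipotent b * lowerUnipotent c * upperUnipotent d := by
  have hdet : g 0 0 * g 1 1 - g 0 1 * g 1 0 = 1 := by rw [← det_fin_two]; exact g.det_coe
  refine ⟨(g 0 0 - 1) / g 1 0, g 1 0, (g 1 1 - 1) / g 1 0, ?_⟩
  ext i j
  fin_cases i <;> fin_cases j <;> simp [Matrix.mul_apply, Fin.sum_univ_two] <;> field_simp <;>
    first | ring1 | linear_combination hdet | linear_combination -hdet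

theorem exists_eq_lower_mul_upper_mul_lower_mul_upper (g : SL(2, F)) :
    ∃ a b c d : F,
      g = lowerUnipotent a * upperUnipotent b * lowerUnipotent c * upperUnipotent d := by
  by_cases hg : g 1 0 = 0
  · have hg' : (lowerUnipotent 1 * g : SL(2, F)) 1 0 ≠ 0 := by
      have hdet : g 0 0 * g 1 1 - g 0 1 * g 1 0 = 1 := by rw [← det_fin_two]; exact g.det_coe
      simp [Matrix.mul_apply, Fin.sum_univ_two]
      intro h; simp [hg] at h; simp [hg, h] at hdet
    obtain ⟨b, c, d, e⟩ := exists_eq_upper_mul_lower_mul_upper hg'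
    refine ⟨-1, b, c, d, ?_⟩
    rw [mul_assoc, mul_assoc, ← mul_assoc (upperUnipotent b), ← e, ← mul_assoc,
      lowerUnipotent_mul_lowerUnipotent, neg_add_cancel, lowerUnipotent_zero, one_mul]
  · obtain ⟨b, c, d, e⟩ := exists_eq_upper_mul_lower_mul_upper hg
    exact ⟨0, b, c, d, by rw [lowerUnipotent_zero, one_mul, e]⟩

end Field

end Matrix.SpecialLinearGroup

namespace CongruenceSubgroup

open Matrix.SpecialLinearGroup

theorem inv_mul_mem_Gamma_iff_map_eq {n : ℕ} {q h : SL(2, ℤ)} :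
    q⁻¹ * h ∈ Gamma n ↔ map (Int.castRingHom (ZMod n)) q = map (Int.castRingHom (ZMod n)) h := by
  rw [Gamma_mem', map_mul, map_inv, inv_mul_eq_one]

theorem inv_mul_mem_Gamma_iff_dvd {n : ℕ} {q h : SL(2, ℤ)} :
    q⁻¹ * h ∈ Gamma n ↔ ∀ i j, (n : ℤ) ∣ h i j - q i j := by
  rw [inv_mul_mem_Gamma_iff_map_eq, Matrix.SpecialLinearGroup.ext_iff]
  simp [ZMod.intCast_eq_intCast_iff_dvd_sub]

theorem mem_Gamma_iff_dvd {n : ℕ} {γ : SL(2, ℤ)} :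
    γ ∈ Gamma n ↔ ∀ i j, (n : ℤ) ∣ γ i j - (1 : Matrix (Fin 2) (Fin 2) ℤ) i j := by
  simpa using inv_mul_mem_Gamma_iff_dvd (n := n) (q := 1) (h := γ)

theorem Gamma_inf_Gamma_le_Gamma_lcm (a b : ℕ) : Gamma a ⊓ Gamma b ≤ Gamma (a.lcm b) := by
  intro γ hγ
  rw [Subgroup.mem_inf, mem_Gamma_iff_dvd, mem_Gamma_iff_dvd] at hγ
  exact mem_Gamma_iff_dvd.2 fun i j => Int.natCast_dvd.2 <|
    Nat.lcm_dvd (Int.natCast_dvd.1 (hγ.1 i j)) (Int.natCast_dvd.1 (hγ.2 i j))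

theorem Gamma_le_Gamma_of_dvd {a b : ℕ} (h : a ∣ b) : Gamma b ≤ Gamma a := fun _ hγ =>
  mem_Gamma_iff_dvd.2 fun i j => (Int.natCast_dvd_natCast.2 h).trans (mem_Gamma_iff_dvd.1 hγ i j)

theorem Gamma_le_Gamma1 (N : ℕ) : Gamma N ≤ Gamma1 N := by
  intro γ hγ
  obtain ⟨h00, -, h10, h11⟩ := Gamma_mem.1 hγ
  exact (Gamma1_mem _ _).2 ⟨h00, h11, h10⟩

def unipotentClosure (Γ : Subgroup SL(2, ℤ)) : Subgroup SL(2, ℤ) :=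
  Subgroup.closure {g | g ∈ Γ ∧ trace (g : Matrix (Fin 2) (Fin 2) ℤ) = 2}

theorem unipotentClosure_le (Γ : Subgroup SL(2, ℤ)) : unipotentClosure Γ ≤ Γ :=
  (Subgroup.closure_le _).2 fun _ hg => hg.1

theorem unipotentClosure_mono {Γ₁ Γ₂ : Subgroup SL(2, ℤ)} (h : Γ₁ ≤ Γ₂) :
    unipotentClosure Γ₁ ≤ unipotentClosure Γ₂ :=
  Subgroup.closure_mono fun _ hg => ⟨h hg.1, hg.2⟩

theorem mem_unipotentClosure {Γ : Subgroup SL(2, ℤ)} {g : SL(2, ℤ)} (hg : g ∈ Γ)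
    (htr : trace (g : Matrix (Fin 2) (Fin 2) ℤ) = 2) : g ∈ unipotentClosure Γ :=
  Subgroup.subset_closure ⟨hg, htr⟩

theorem Gamma1_inf_Gamma_le_unipotentClosure_sup_Gamma_lcm (N₁ N₂ : ℕ) :
    Gamma1 N₁ ⊓ Gamma N₂ ≤ unipotentClosure (Gamma1 N₁ ⊓ Gamma N₂) ⊔ Gamma (N₁.lcm N₂) := by
  intro h hh
  obtain ⟨hh₁, hh₂⟩ := Subgroup.mem_inf.1 hh
  obtain ⟨h00, h11, h10⟩ := (Gamma1_mem _ _).1 hh₁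
  have hq₂ : upperUnipotent (h 0 1) ∈ Gamma N₂ := by simp [(Gamma_mem.1 hh₂).2.1]
  have hq : upperUnipotent (h 0 1) ∈ unipotentClosure (Gamma1 N₁ ⊓ Gamma N₂) :=
    mem_unipotentClosure (Subgroup.mem_inf.2 ⟨by simp, hq₂⟩) (by simp [trace_fin_two])
  refine Subgroup.mem_sup_of_inv_mul_mem hq (Gamma_inf_Gamma_le_Gamma_lcm _ _
    (Subgroup.mem_inf.2 ⟨?_, mul_mem (inv_mem hq₂) hh₂⟩))
  -- `h` is upper unipotent modulo `N₁`
  rw [inv_mul_mem_Gamma_iff_map_eq]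
  ext i j
  fin_cases i <;> fin_cases j <;> simp [h00, h11, h10]

theorem upperUnipotent_mem_unipotentClosure_Gamma {m : ℕ} {b : ℤ} (hb : (m : ℤ) ∣ b) :
    upperUnipotent b ∈ unipotentClosure (Gamma m) :=
  mem_unipotentClosure (by simp [(ZMod.intCast_zmod_eq_zero_iff_dvd _ _).2 hb])
    (by simp [trace_fin_two])

theorem lowerUnipotent_mem_unipotentClosure_Gamma {m : ℕ} {c : ℤ} (hc : (m : ℤ) ∣ c) :
    lowerUnipotent c ∈ unipotentClosure (Gamma m) :=
  mem_unipotentClosure (by simp [(ZMod.intCast_zmod_eq_zero_iff_dvd _ _).2 hc])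
    (by simp [trace_fin_two])

theorem Gamma_le_unipotentClosure_sup_Gamma_mul_of_not_dvd {m p : ℕ} (hp : p.Prime)
    (hpm : ¬ p ∣ m) : Gamma m ≤ unipotentClosure (Gamma m) ⊔ Gamma (m * p) := by
  have := Fact.mk hp
  intro h hh
  have hm : (m : ZMod p) ≠ 0 := by rwa [Ne, ZMod.natCast_eq_zero_iff]
  have lift (s : ZMod p) : ∃ t : ℤ, ((m * t : ℤ) : ZMod p) = s :=
    ⟨((s / m : ZMod p).cast : ℤ), by push_cast; exact mul_div_cancel₀ _ hm⟩
  choose t ht using lift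
  obtain ⟨a, b, c, d, e⟩ :=
    exists_eq_lower_mul_upper_mul_lower_mul_upper (map (Int.castRingHom (ZMod p)) h)
  set q := lowerUnipotent (m * t a) * upperUnipotent (m * t b) * lowerUnipotent (m * t c) *
    upperUnipotent (m * t d)
  have hq : q ∈ unipotentClosure (Gamma m) := by
    refine mul_mem (mul_mem (mul_mem ?_ ?_) ?_) ?_
    · exact lowerUnipotent_mem_unipotentClosure_Gamma (dvd_mul_right _ _)
    · exact upperUnipotent_mem_unipotentClosure_Gamma (dvd_mul_right _ _)
    · exact lowerUnipotent_mem_unipotentClosure_Gamma (dvd_mul_right _ _)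
    · exact upperUnipotent_mem_unipotentClosure_Gamma (dvd_mul_right _ _)
  have hqp : q⁻¹ * h ∈ Gamma p := inv_mul_mem_Gamma_iff_map_eq.2 (by simp [q, ht, e])
  have hqm : q⁻¹ * h ∈ Gamma m := mul_mem (inv_mem (unipotentClosure_le _ hq)) hh
  have hcop : m.Coprime p := (Nat.coprime_comm.1 ((Nat.Prime.coprime_iff_not_dvd hp).2 hpm))
  refine Subgroup.mem_sup_of_inv_mul_mem hq ?_
  rw [← hcop.lcm_eq_mul]
  exact Gamma_inf_Gamma_le_Gamma_lcm _ _ (Subgroup.mem_inf.2 ⟨hqm, hqp⟩)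

theorem Gamma_le_unipotentClosure_sup_Gamma_mul_of_dvd {m p : ℕ} (hpm : p ∣ m) :
    Gamma m ≤ unipotentClosure (Gamma m) ⊔ Gamma (m * p) := by
  rcases eq_or_ne m 0 with rfl | hm
  · rw [zero_mul]; exact le_sup_right
  intro h hh
  have hh' := mem_Gamma_iff_dvd.1 hh
  obtain ⟨x, hx⟩ : (m : ℤ) ∣ h 0 0 - 1 := by simpa using hh' 0 0
  obtain ⟨y, hy⟩ : (m : ℤ) ∣ h 0 1 := by simpa using hh' 0 1
  obtain ⟨z, hz⟩ : (m : ℤ) ∣ h 1 0 := by simpa using hh' 1 0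
  obtain ⟨w, hw⟩ : (m : ℤ) ∣ h 1 1 - 1 := by simpa using hh' 1 1
  have hdet : h 0 0 * h 1 1 - h 0 1 * h 1 0 = 1 := by rw [← det_fin_two]; exact h.det_coe
  have htr : x + w = -(m * (x * w - y * z)) := by
    refine mul_left_cancel₀ (Int.natCast_ne_zero.2 hm) ?_
    rw [show h 0 0 = 1 + m * x by linear_combination hx, show h 1 1 = 1 + m * w by
      linear_combination hw, hy, hz] at hdet
    linear_combination hdet
  -- `h = 1 + m [[x, y], [z, w]]` with `p ∣ x + w`, and `q ≡ 1 + m [[x, y], [z, -x]] (mod m * p)`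
  set q := negOneUnipotent (m * x) * upperUnipotent (m * (y - x)) * lowerUnipotent (m * (z + x))
  have hq : q ∈ unipotentClosure (Gamma m) := by
    refine mul_mem (mul_mem ?_ (upperUnipotent_mem_unipotentClosure_Gamma (dvd_mul_right _ _)))
      (lowerUnipotent_mem_unipotentClosure_Gamma (dvd_mul_right _ _))
    refine mem_unipotentClosure ?_ (by simp [trace_fin_two])
    simp
  have hsq : ((m * p : ℕ) : ℤ) ∣ m * m := by
    push_cast; exact mul_dvd_mul_left _ (Int.natCast_dvd_natCast.2 hpm)
  refine Subgroup.mem_sup_of_inv_mul_mem hq (inv_mul_mem_Gamma_iff_dvd.2 fun i j => hsq.trans ?_)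
  fin_cases i <;> fin_cases j <;> simp [q, Matrix.mul_apply, Fin.sum_univ_two]
  · exact Dvd.intro (-((1 + m * x) * (y - x) + x) * (z + x)) (by linear_combination -hx)
  · exact Dvd.intro (-(x * (y - x))) (by linear_combination -hy)
  · exact Dvd.intro (x * (m * (y - x) + 1) * (z + x)) (by linear_combination -hz)
  · exact Dvd.intro (x * (y - x) - (x * w - y * z)) (by linear_combination -hw - m * htr)

theorem Gamma_le_unipotentClosure_sup_Gamma_mul_of_prime {m p : ℕ} (hp : p.Prime) :
    Gamma m ≤ unipotentClosure (Gamma m) ⊔ Gamma (m * p) := by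
  by_cases hpm : p ∣ m
  · exact Gamma_le_unipotentClosure_sup_Gamma_mul_of_dvd hpm
  · exact Gamma_le_unipotentClosure_sup_Gamma_mul_of_not_dvd hp hpm

theorem Gamma_le_unipotentClosure_sup_Gamma_mul (n : ℕ) {k : ℕ} (hk : k ≠ 0) :
    Gamma n ≤ unipotentClosure (Gamma n) ⊔ Gamma (n * k) := by
  induction k using induction_on_primes with
  | zero => exact absurd rfl hk
  | one => rw [mul_one]; exact le_sup_right
  | prime_mul p a hp ih =>
    have hUa : unipotentClosure (Gamma (n * a)) ≤ unipotentClosure (Gamma n) :=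
      unipotentClosure_mono (Gamma_le_Gamma_of_dvd (dvd_mul_right n a))
    calc Gamma n ≤ unipotentClosure (Gamma n) ⊔ Gamma (n * a) := ih (right_ne_zero_of_mul hk)
      _ ≤ unipotentClosure (Gamma n) ⊔ (unipotentClosure (Gamma (n * a)) ⊔ Gamma (n * a * p)) :=
        sup_le_sup_left (Gamma_le_unipotentClosure_sup_Gamma_mul_of_prime hp) _
      _ = unipotentClosure (Gamma n) ⊔ Gamma (n * (p * a)) := by
        rw [← sup_assoc, sup_of_le_left hUa, mul_assoc, mul_comm a]

theorem Gamma1_inf_Gamma_le_unipotentClosure_sup_Gamma (N₁ N₂ : ℕ) {M : ℕ} (hM : M ≠ 0) :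
    Gamma1 N₁ ⊓ Gamma N₂ ≤ unipotentClosure (Gamma1 N₁ ⊓ Gamma N₂) ⊔ Gamma M := by
  have hL : Gamma (N₁.lcm N₂) ≤ Gamma1 N₁ ⊓ Gamma N₂ :=
    le_inf ((Gamma_le_Gamma_of_dvd (Nat.dvd_lcm_left _ _)).trans (Gamma_le_Gamma1 _))
      (Gamma_le_Gamma_of_dvd (Nat.dvd_lcm_right _ _))
  refine (Gamma1_inf_Gamma_le_unipotentClosure_sup_Gamma_lcm N₁ N₂).trans (sup_le le_sup_left ?_)
  exact (Gamma_le_unipotentClosure_sup_Gamma_mul _ hM).trans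
    (sup_le_sup (unipotentClosure_mono hL) (Gamma_le_Gamma_of_dvd (dvd_mul_left _ _)))

end CongruenceSubgroup

theorem le_of_subset_pmSet {Γ Γ' : Subgroup SL(2, ℤ)} (h1 : (-1 : SL(2, ℤ)) ∉ Γ')
    (h2 : (Γ' : Set SL(2, ℤ)) ⊆ pmSet Γ) (hle : Γ ≤ Γ') : Γ' ≤ Γ := by
  intro A hA
  refine (h2 hA).resolve_right fun hA' => h1 ?_
  simpa using mul_mem (hle hA') (inv_mem hA)

theorem congruence_hyperbolic_projective_lift_eq_general
    (N₁ N₂ : ℕ)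
    (Γ' : Subgroup SL(2, ℤ))
    (h1 : (-1 : SL(2, ℤ)) ∉ Γ')
    (h2 : pmSet (Γ' : Set SL(2, ℤ)) =
      pmSet ((Gamma1 N₁ ⊓ Gamma N₂ : Subgroup SL(2, ℤ)) : Set SL(2, ℤ)))
    (h3 : ∀ γ ∈ Gamma1 N₁ ⊓ Gamma N₂, γ ≠ 1 →
      (Matrix.trace ((γ : SL(2, ℤ)) : Matrix (Fin 2) (Fin 2) ℤ) = 2 ∨
       Matrix.trace ((γ : SL(2, ℤ)) : Matrix (Fin 2) (Fin 2) ℤ) = -2) → γ ∈ Γ')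
    (h4 : ∃ M : ℕ, 0 < M ∧ Gamma M ≤ Γ') :
    Γ' = Gamma1 N₁ ⊓ Gamma N₂ := by
  obtain ⟨M, hM, hMΓ'⟩ := h4
  have hU : unipotentClosure (Gamma1 N₁ ⊓ Gamma N₂) ≤ Γ' := by
    refine (Subgroup.closure_le _).2 fun g ⟨hg, htr⟩ => ?_
    rcases eq_or_ne g 1 with rfl | hg1
    · exact one_mem _
    · exact h3 g hg hg1 (Or.inl htr)
  have hle : Gamma1 N₁ ⊓ Gamma N₂ ≤ Γ' :=
    (Gamma1_inf_Gamma_le_unipotentClosure_sup_Gamma N₁ N₂ hM.ne').trans (sup_le hU hMΓ')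
  exact le_antisymm (le_of_subset_pmSet h1 (fun A hA => h2 ▸ Or.inl hA) hle) hle

/-- The Hodge bundle is the unique congruence theta characteristic (group-theoretic form):
if `Γ = Γ₁(N₁) ⊓ Γ(N₂)` with `gcd(N₁,N₂)` odd and `lcm(N₁,N₂) ≥ 5`, then any hyperbolic
projective lift of `Γ` (a subgroup of `SL(2,ℤ)` not containing `-I`, with the same projective
image as `Γ`, and containing all parabolic elements of `Γ`) that is a congruence subgroup must
equal `Γ` itself. -/
theorem congruence_hyperbolic_projective_lift_eq
    (N₁ N₂ : ℕ) (hN₁ : 0 < N₁) (hN₂ : 0 < N₂)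
    (hodd : Odd (Nat.gcd N₁ N₂)) (hlcm : 5 ≤ Nat.lcm N₁ N₂)
    (Γ' : Subgroup SL(2, ℤ))
    (h1 : (-1 : SL(2, ℤ)) ∉ Γ')
    (h2 : pmSet (Γ' : Set SL(2, ℤ)) =
      pmSet ((Gamma1 N₁ ⊓ Gamma N₂ : Subgroup SL(2, ℤ)) : Set SL(2, ℤ)))
    (h3 : ∀ γ ∈ Gamma1 N₁ ⊓ Gamma N₂, γ ≠ 1 →
      (Matrix.trace ((γ : SL(2, ℤ)) : Matrix (Fin 2) (Fin 2) ℤ) = 2 ∨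
       Matrix.trace ((γ : SL(2, ℤ)) : Matrix (Fin 2) (Fin 2) ℤ) = -2) → γ ∈ Γ')
    (h4 : ∃ M : ℕ, 0 < M ∧ Gamma M ≤ Γ') :
    Γ' = Gamma1 N₁ ⊓ Gamma N₂ :=
  congruence_hyperbolic_projective_lift_eq_general N₁ N₂ Γ' h1 h2 h3 h4
end

section
/- For every integer s ≥ 1, the group Γ(2^s) is generated by Γ(2^{s+1}) together with the three matrices α = [[1, 2^s],[0,1]], β = [[1+2^s, −2^s],[2^s, 1−2^s]], and γ = [[1,0],[2^s,1]]; that is, the subgroup of SL(2,ℤ) generated by Γ(2^{s+1}) ∪ {α, β, γ} equals Γ(2^s). -/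
open Matrix MatrixGroups CongruenceSubgroup

/-- The shearing matrix `α = [[1, 2^s],[0,1]]` in `SL(2,ℤ)`. -/
def alphaMat (s : ℕ) : SL(2, ℤ) :=
  ⟨!![1, 2 ^ s; 0, 1], by norm_num [Matrix.det_fin_two_of]⟩

/-- The matrix `β = [[1+2^s, −2^s],[2^s, 1−2^s]]` in `SL(2,ℤ)`. -/
def betaMat (s : ℕ) : SL(2, ℤ) :=
  ⟨!![1 + 2 ^ s, -(2 ^ s); 2 ^ s, 1 - 2 ^ s], by
    simp [Matrix.det_fin_two_of]; ring⟩

/-- The shearing matrix `γ = [[1,0],[2^s,1]]` in `SL(2,ℤ)`. -/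
def gammaMat (s : ℕ) : SL(2, ℤ) :=
  ⟨!![1, 0; 2 ^ s, 1], by norm_num [Matrix.det_fin_two_of]⟩

/-!
Let `N = 2 ^ s` with `s ≥ 1`, so that `N ^ 2 ≡ 0 [MOD 2N]`. Modulo `2N`, the map `X ↦ 1 + N • X`
turns addition of integer matrices into multiplication, and `det (1 + N • X) ≡ 1 + N tr X`, so
every `A = 1 + N • X` in `Γ(N)` has `N tr X ≡ 0`. Writing `X = [[a, b], [c, d]]`, the sum
`a • [[1, -1], [1, -1]] + (a + b) • [[0, 1], [0, 0]] + (c - a) • [[0, 0], [1, 0]]`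
is `[[a, b], [c, -a]]`, and `N d ≡ -N a`; hence `A ≡ β ^ a * α ^ (a + b) * γ ^ (c - a) [MOD 2N]`.
-/

theorem one_add_smul_mul_one_add_smul {R A : Type*} [CommSemiring R] [Semiring A] [Algebra R A]
    {r : R} (hr : r ^ 2 = 0) (x y : A) : (1 + r • x) * (1 + r • y) = 1 + r • (x + y) := by
  rw [add_mul, mul_add, mul_add, smul_mul_smul_comm, ← sq r, hr, zero_smul, add_zero, one_mul,
    one_mul, mul_one, smul_add, add_right_comm, add_assoc]

theorem Matrix.det_one_add_smul_of_sq_eq_zero {ι R : Type*} [Fintype ι] [DecidableEq ι]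
    [CommRing R] {r : R} (hr : r ^ 2 = 0) (M : Matrix ι ι R) :
    (1 + r • M).det = 1 + M.trace * r := by
  rw [Matrix.det_one_add_smul, hr, mul_zero, add_zero]

namespace Matrix.SpecialLinearGroup

variable {ι R : Type*} [Fintype ι] [DecidableEq ι] [CommRing R]

theorem coe_zpow_of_coe_eq_one_add_smul {r : R} (hr : r ^ 2 = 0) {g : SpecialLinearGroup ι R}
    {X : Matrix ι ι R} (hg : (g : Matrix ι ι R) = 1 + r • X) (k : ℤ) :
    ((g ^ k : SpecialLinearGroup ι R) : Matrix ι ι R) = 1 + r • (k • X) := by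
  induction k using Int.induction_on with
  | zero => simp
  | succ k ih =>
    rw [_root_.zpow_add_one, coe_mul, ih, hg, one_add_smul_mul_one_add_smul hr, add_smul, one_smul]
  | pred k ih =>
    have hinv : (1 + r • X) * (1 + r • -X) = 1 := by
      rw [one_add_smul_mul_one_add_smul hr, add_neg_cancel, smul_zero, add_zero]
    calc ((g ^ (-(k : ℤ) - 1) : SpecialLinearGroup ι R) : Matrix ι ι R)
        = ((g ^ (-(k : ℤ) - 1) * g : SpecialLinearGroup ι R) : Matrix ι ι R) * (1 + r • -X) := by
          rw [coe_mul, hg, mul_assoc, hinv, mul_one]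
      _ = 1 + r • ((-(k : ℤ) - 1) • X) := by
          rw [← _root_.zpow_add_one, sub_add_cancel, ih, one_add_smul_mul_one_add_smul hr, sub_smul,
            one_smul, sub_eq_add_neg]

theorem coe_map_of_coe_eq_one_add_smul {S : Type*} [CommRing S]
    (f : R →+* S) {A : SpecialLinearGroup ι R} {r : R} {X : Matrix ι ι R}
    (hA : (A : Matrix ι ι R) = 1 + r • X) :
    (map f A : Matrix ι ι S) = 1 + f r • X.map f := by
  ext i j
  simp [hA, Matrix.one_apply, apply_ite f]

theorem eq_zpow_mul_zpow_mul_zpow {r : R} (hr : r ^ 2 = 0) {a b c A : SL(2, R)}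
    (ha : (a : Matrix (Fin 2) (Fin 2) R) = 1 + r • !![0, 1; 0, 0])
    (hb : (b : Matrix (Fin 2) (Fin 2) R) = 1 + r • !![1, -1; 1, -1])
    (hc : (c : Matrix (Fin 2) (Fin 2) R) = 1 + r • !![0, 0; 1, 0])
    {X : Matrix (Fin 2) (Fin 2) ℤ} (hA : (A : Matrix (Fin 2) (Fin 2) R) = 1 + r • X.map (↑)) :
    A = b ^ X 0 0 * a ^ (X 0 0 + X 0 1) * c ^ (X 1 0 - X 0 0) := by
  have htrace : r * X 1 1 = -(r * X 0 0) := by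
    have hdet := A.2
    rw [hA, det_one_add_smul_of_sq_eq_zero hr, trace_fin_two, add_eq_left] at hdet
    simp only [map_apply] at hdet
    linear_combination hdet
  ext i j
  simp only [coe_mul, coe_zpow_of_coe_eq_one_add_smul hr ha, coe_zpow_of_coe_eq_one_add_smul hr hb,
    coe_zpow_of_coe_eq_one_add_smul hr hc, one_add_smul_mul_one_add_smul hr, hA]
  fin_cases i <;> fin_cases j <;> simp [htrace]

end Matrix.SpecialLinearGroup

namespace CongruenceSubgroup

theorem mem_Gamma_iff_exists_coe_eq_one_add_smul {N : ℕ} {A : SL(2, ℤ)} :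
    A ∈ Γ(N) ↔
      ∃ X : Matrix (Fin 2) (Fin 2) ℤ, (A : Matrix (Fin 2) (Fin 2) ℤ) = 1 + (N : ℤ) • X := by
  constructor
  · intro hA
    have hdvd (i j : Fin 2) : (N : ℤ) ∣ A i j - (1 : Matrix (Fin 2) (Fin 2) ℤ) i j := by
      rw [← ZMod.intCast_zmod_eq_zero_iff_dvd, Int.cast_sub, sub_eq_zero]
      simpa [Matrix.one_apply, apply_ite] using congr($(Gamma_mem'.1 hA) i j)
    refine ⟨Matrix.of fun i j ↦ (A i j - (1 : Matrix (Fin 2) (Fin 2) ℤ) i j) / N, ?_⟩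
    ext i j
    simp [Int.mul_ediv_cancel' (hdvd i j)]
  · rintro ⟨X, hX⟩
    refine Gamma_mem'.2 (Subtype.ext ?_)
    simp [SpecialLinearGroup.coe_map_of_coe_eq_one_add_smul (Int.castRingHom (ZMod N)) hX]

theorem Gamma_le_Gamma_of_dvd_s13 {M N : ℕ} (h : N ∣ M) : Γ(M) ≤ Γ(N) := by
  obtain ⟨k, rfl⟩ := h
  intro A hA
  obtain ⟨X, hX⟩ := mem_Gamma_iff_exists_coe_eq_one_add_smul.1 hA
  refine mem_Gamma_iff_exists_coe_eq_one_add_smul.2 ⟨(k : ℤ) • X, ?_⟩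
  rw [hX, smul_smul, Nat.cast_mul]

end CongruenceSubgroup

theorem coe_alphaMat (s : ℕ) :
    (alphaMat s : Matrix (Fin 2) (Fin 2) ℤ) = 1 + ((2 ^ s : ℕ) : ℤ) • !![0, 1; 0, 0] := by
  ext i j; fin_cases i <;> fin_cases j <;> simp [alphaMat]

theorem coe_betaMat (s : ℕ) :
    (betaMat s : Matrix (Fin 2) (Fin 2) ℤ) = 1 + ((2 ^ s : ℕ) : ℤ) • !![1, -1; 1, -1] := by
  ext i j; fin_cases i <;> fin_cases j <;> simp [betaMat, sub_eq_add_neg]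

theorem coe_gammaMat (s : ℕ) :
    (gammaMat s : Matrix (Fin 2) (Fin 2) ℤ) = 1 + ((2 ^ s : ℕ) : ℤ) • !![0, 0; 1, 0] := by
  ext i j; fin_cases i <;> fin_cases j <;> simp [gammaMat]

theorem div_zpow_mul_zpow_mul_zpow_mem_Gamma {s : ℕ} (hs : 1 ≤ s) {A : SL(2, ℤ)}
    {X : Matrix (Fin 2) (Fin 2) ℤ}
    (hX : (A : Matrix (Fin 2) (Fin 2) ℤ) = 1 + ((2 ^ s : ℕ) : ℤ) • X) :
    A / (betaMat s ^ X 0 0 * alphaMat s ^ (X 0 0 + X 0 1) * gammaMat s ^ (X 1 0 - X 0 0)) ∈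
      Γ(2 ^ (s + 1)) := by
  set f := Int.castRingHom (ZMod (2 ^ (s + 1)))
  have hr : ((2 ^ s : ℕ) : ZMod (2 ^ (s + 1))) ^ 2 = 0 := by
    rw [← Nat.cast_pow, ZMod.natCast_eq_zero_iff, ← pow_mul]
    exact pow_dvd_pow 2 (by omega)
  refine (MonoidHom.div_mem_ker_iff (SpecialLinearGroup.map f)).2 ?_
  simp only [map_mul, map_zpow]
  refine SpecialLinearGroup.eq_zpow_mul_zpow_mul_zpow hr ?_ ?_ ?_ ?_
  · simpa [f, ← Matrix.ext_iff, Fin.forall_fin_two] using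
      SpecialLinearGroup.coe_map_of_coe_eq_one_add_smul f (coe_alphaMat s)
  · simpa [f, ← Matrix.ext_iff, Fin.forall_fin_two] using
      SpecialLinearGroup.coe_map_of_coe_eq_one_add_smul f (coe_betaMat s)
  · simpa [f, ← Matrix.ext_iff, Fin.forall_fin_two] using
      SpecialLinearGroup.coe_map_of_coe_eq_one_add_smul f (coe_gammaMat s)
  · simpa [f, ← Matrix.ext_iff, Fin.forall_fin_two] using
      SpecialLinearGroup.coe_map_of_coe_eq_one_add_smul f hX

/-- For `s ≥ 1`, the group `Γ(2^s)` is generated by `Γ(2^{s+1})` together with the three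
matrices `α = [[1,2^s],[0,1]]`, `β = [[1+2^s,−2^s],[2^s,1−2^s]]` and `γ = [[1,0],[2^s,1]]`. -/
theorem Gamma_two_pow_generators (s : ℕ) (hs : 1 ≤ s) :
    Subgroup.closure ((Gamma (2 ^ (s + 1)) : Set SL(2, ℤ)) ∪
        {alphaMat s, betaMat s, gammaMat s}) = Gamma (2 ^ s) := by
  set S : Set SL(2, ℤ) := (Gamma (2 ^ (s + 1)) : Set SL(2, ℤ)) ∪
    {alphaMat s, betaMat s, gammaMat s}
  apply le_antisymm
  · rw [Subgroup.closure_le]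
    rintro A (hA | rfl | rfl | rfl)
    · exact Gamma_le_Gamma_of_dvd_s13 (pow_dvd_pow 2 s.le_succ) hA
    · exact mem_Gamma_iff_exists_coe_eq_one_add_smul.2 ⟨_, coe_alphaMat s⟩
    · exact mem_Gamma_iff_exists_coe_eq_one_add_smul.2 ⟨_, coe_betaMat s⟩
    · exact mem_Gamma_iff_exists_coe_eq_one_add_smul.2 ⟨_, coe_gammaMat s⟩
  intro A hA
  obtain ⟨X, hX⟩ := mem_Gamma_iff_exists_coe_eq_one_add_smul.1 hA
  have hg : betaMat s ^ X 0 0 * alphaMat s ^ (X 0 0 + X 0 1) * gammaMat s ^ (X 1 0 - X 0 0) ∈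
      Subgroup.closure S := by
    refine mul_mem (mul_mem ?_ ?_) ?_ <;> exact zpow_mem (Subgroup.subset_closure (by simp [S])) _
  have hAg := div_zpow_mul_zpow_mul_zpow_mem_Gamma hs hX
  simpa using mul_mem (Subgroup.subset_closure (k := S) (Or.inl hAg)) hg
end

section
/- For every integer s ≥ 1, let H be the subgroup of Γ₁(2^s) generated by Γ(2^{s+1}) together with all squares A² (A ∈ Γ₁(2^s)) and all commutators ⁅A,B⁆ (A, B ∈ Γ₁(2^s)). Then H has index 4 in Γ₁(2^s), and Γ₁(2^s) is generated by H together with the two matrices τ = [[1,1],[0,1]] and γ = [[1,0],[2^s,1]]; in other words, V₂(Γ₁(2^s)/Γ(2^{s+1})) ≅ (ℤ/2ℤ)² with basis the images of τ and γ. -/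
open Matrix MatrixGroups CongruenceSubgroup

/-- The shearing matrix `τ = [[1,1],[0,1]]` in `SL(2,ℤ)`. -/
def tauMat : SL(2, ℤ) := ⟨!![1, 1; 0, 1], by norm_num [Matrix.det_fin_two_of]⟩

/-!
For even `N ≠ 0`, the map `[[a, b], [c, d]] ↦ (b mod 2, c/N mod 2)` is a surjective homomorphism
`Γ₁(N) → (ℤ/2)²` sending `τ` and `γ` to the standard basis. As `(ℤ/2)²` is abelian of exponent
2, its kernel contains squares and commutators, and it contains `Γ(2N)`; so it contains `H`. Conversely, an element of the kernel has `b` even and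
`2N ∣ c`. If `a ≡ 1 (mod 2N)`, then `A = (A τ^{-b}) τ^b` with `A τ^{-b} ∈ Γ(2N)` and
`τ^b = (τ^{b/2})²`. Otherwise `a ≡ 1 + N`, and we reduce to the first case by multiplying by
the square of `[[1, 1], [N, 1 + N]] ∈ Γ₁(N)`, whose top-left entry is `1 + N`.
So `H` is the kernel, which has index 4.
-/

open ModularGroup

namespace ZMod

lemma intCast_zmod_eq_one_iff_dvd {N : ℕ} {x : ℤ} : (x : ZMod N) = 1 ↔ (N : ℤ) ∣ x - 1 := by
  rw [← intCast_zmod_eq_zero_iff_dvd, Int.cast_sub, Int.cast_one, sub_eq_zero]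

lemma intCast_eq_one_of_dvd {m n : ℕ} (h : m ∣ n) {x : ℤ} (hx : (x : ZMod n) = 1) :
    (x : ZMod m) = 1 := by
  rw [intCast_zmod_eq_one_iff_dvd] at hx ⊢
  exact dvd_trans (Int.natCast_dvd_natCast.mpr h) hx

lemma intCast_eq_zero_of_dvd {m n : ℕ} (h : m ∣ n) {x : ℤ} (hx : (x : ZMod n) = 0) :
    (x : ZMod m) = 0 := by
  rw [intCast_zmod_eq_zero_iff_dvd] at hx ⊢
  exact dvd_trans (Int.natCast_dvd_natCast.mpr h) hx

end ZMod

lemma closure_ofAdd_zmod_two_basis_eq_top :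
    Subgroup.closure {Multiplicative.ofAdd ((1, 0) : ZMod 2 × ZMod 2),
      Multiplicative.ofAdd (0, 1)} = ⊤ := by
  refine eq_top_iff.mpr fun q _ => Subgroup.mem_closure_pair.mpr ?_
  obtain ⟨x, y⟩ := q
  fin_cases x <;> fin_cases y
  exacts [⟨0, 0, rfl⟩, ⟨0, 1, rfl⟩, ⟨1, 0, rfl⟩, ⟨1, 1, rfl⟩]

namespace Subgroup

variable {G Q : Type*} [Group G] {K : Subgroup G}

theorem relIndex_map_subtype_ker [Group Q] {φ : K →* Q} (hφ : Function.Surjective φ) :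
    (φ.ker.map K.subtype).relIndex K = Nat.card Q := by
  have h := relIndex_map_map_of_injective φ.ker ⊤ K.subtype_injective
  rw [← MonoidHom.range_eq_map, range_subtype] at h
  rw [h, relIndex_top_right, index_ker, MonoidHom.range_eq_top.mpr hφ, card_top]

theorem closure_map_subtype_ker_union_eq [Group Q] {φ : K →* Q} {S : Set K}
    (hS : closure (φ '' S) = ⊤) :
    closure ((φ.ker.map K.subtype : Set G) ∪ K.subtype '' S) = K := by
  set L := closure ((φ.ker.map K.subtype : Set G) ∪ K.subtype '' S)
  refine le_antisymm ((closure_le _).mpr (Set.union_subset (map_subtype_le _) ?_)) ?_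
  · rintro _ ⟨x, -, rfl⟩
    exact x.2
  have hker : φ.ker ≤ L.comap K.subtype := fun x hx => subset_closure (Or.inl ⟨x, hx, rfl⟩)
  have hS' : closure S ≤ L.comap K.subtype :=
    (closure_le _).mpr fun x hx => subset_closure (Or.inr ⟨x, hx, rfl⟩)
  have hmap : ⊤ ≤ (L.comap K.subtype).map φ :=
    calc ⊤ = closure (φ '' S) := hS.symm
      _ = (closure S).map φ := (MonoidHom.map_closure φ S).symm
      _ ≤ (L.comap K.subtype).map φ := map_mono hS'
  refine subgroupOf_eq_top.mp ?_
  rw [subgroupOf, ← comap_map_eq_self hker, top_le_iff.mp hmap, comap_top]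

open scoped commutatorElement in
theorem closure_squares_commutators_le_map_ker [CommGroup Q] (hQ : ∀ q : Q, q ^ 2 = 1)
    (φ : K →* Q) {N : Subgroup G} (hN : N ≤ φ.ker.map K.subtype) :
    closure ((N : Set G) ∪ {x | (∃ A ∈ K, x = A ^ 2) ∨
      ∃ A ∈ K, ∃ B ∈ K, x = A * B * A⁻¹ * B⁻¹}) ≤ φ.ker.map K.subtype := by
  refine (closure_le _).mpr (Set.union_subset hN ?_)
  rintro _ (⟨A, hA, rfl⟩ | ⟨A, hA, B, hB, rfl⟩)
  · exact ⟨⟨A, hA⟩ ^ 2, by rw [SetLike.mem_coe, MonoidHom.mem_ker, map_pow, hQ], rfl⟩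
  · refine ⟨⁅(⟨A, hA⟩ : K), (⟨B, hB⟩ : K)⁆, ?_, rfl⟩
    rw [SetLike.mem_coe, MonoidHom.mem_ker, map_commutatorElement,
      commutatorElement_eq_one_iff_mul_comm]
    exact mul_comm _ _

end Subgroup

namespace CongruenceSubgroup

lemma T_zpow_mem_Gamma1 (N : ℕ) (k : ℤ) : T ^ k ∈ Gamma1 N := by
  simp [coe_T_zpow]

lemma Gamma_le_Gamma1_of_dvd {M N : ℕ} (h : N ∣ M) : Gamma M ≤ Gamma1 N := by
  intro A hA
  obtain ⟨ha, -, hc, hd⟩ := Gamma_mem.mp hA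
  exact (Gamma1_mem N A).mpr ⟨ZMod.intCast_eq_one_of_dvd h ha, ZMod.intCast_eq_one_of_dvd h hd,
    ZMod.intCast_eq_zero_of_dvd h hc⟩

def rootMat (N : ℕ) : SL(2, ℤ) := ⟨!![1, 1; (N : ℤ), 1 + N], by simp [det_fin_two]⟩

lemma rootMat_mem_Gamma1 (N : ℕ) : rootMat N ∈ Gamma1 N := by
  rw [Gamma1_mem]
  simp [rootMat]

/-- Multiplicative because `a ≡ d ≡ 1 (mod 2)` when `N` is even. -/
def gamma1Parity (N : ℕ) (hN : 2 ∣ N) (hN0 : N ≠ 0) :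
    Gamma1 N →* Multiplicative (ZMod 2 × ZMod 2) where
  toFun A := .ofAdd (((A : SL(2, ℤ)) 0 1 : ZMod 2), (((A : SL(2, ℤ)) 1 0 / N : ℤ) : ZMod 2))
  map_one' := by simp
  map_mul' := by
    rintro ⟨A, hA⟩ ⟨B, hB⟩
    obtain ⟨ha, hd, hc⟩ := (Gamma1_mem N A).mp hA
    obtain ⟨ha', hd', hc'⟩ := (Gamma1_mem N B).mp hB
    obtain ⟨x, hx⟩ := (ZMod.intCast_zmod_eq_zero_iff_dvd _ N).mp hc
    obtain ⟨y, hy⟩ := (ZMod.intCast_zmod_eq_zero_iff_dvd _ N).mp hc'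
    have hN0' : (N : ℤ) ≠ 0 := by exact_mod_cast hN0
    simp only [MulMemClass.mk_mul_mk, Matrix.SpecialLinearGroup.coe_mul, Matrix.mul_apply,
      Fin.sum_univ_two, ← ofAdd_add, Prod.mk_add_mk]
    rw [hx, hy, show (N : ℤ) * x * B 0 0 + A 1 1 * (N * y) = N * (x * B 0 0 + A 1 1 * y) by ring,
      Int.mul_ediv_cancel_left _ hN0', Int.mul_ediv_cancel_left _ hN0',
      Int.mul_ediv_cancel_left _ hN0']
    push_cast [ZMod.intCast_eq_one_of_dvd hN ha, ZMod.intCast_eq_one_of_dvd hN hd,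
      ZMod.intCast_eq_one_of_dvd hN ha', ZMod.intCast_eq_one_of_dvd hN hd']
    ring_nf

section

variable {N : ℕ} {H : Subgroup SL(2, ℤ)}

theorem mem_of_top_left_eq_one (hΓ : Gamma (2 * N) ≤ H) (hsq : ∀ A ∈ Gamma1 N, A ^ 2 ∈ H)
    {A : SL(2, ℤ)} (ha : (A 0 0 : ZMod (2 * N)) = 1) (hb : 2 ∣ A 0 1)
    (hc : (A 1 0 : ZMod (2 * N)) = 0) : A ∈ H := by
  obtain ⟨m, hm⟩ := hb
  have hT : T ^ A 0 1 = (T ^ m) ^ 2 := by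
    rw [← zpow_natCast, ← _root_.zpow_mul, hm]
    ring_nf
  have hdet : (A 0 0 : ZMod (2 * N)) * A 1 1 - A 0 1 * A 1 0 = 1 := by
    have h := A.det_coe
    rw [Matrix.det_fin_two] at h
    simpa using congrArg (Int.cast : ℤ → ZMod (2 * N)) h
  have hΓA : A * T ^ (-A 0 1) ∈ Gamma (2 * N) := by
    simp only [Gamma_mem, Matrix.SpecialLinearGroup.coe_mul, coe_T_zpow, mul_apply,
      Fin.sum_univ_two, of_apply, cons_val', cons_val_zero, cons_val_one, cons_val_fin_one]
    push_cast
    refine ⟨by linear_combination ha, ?_, by linear_combination hc, ?_⟩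
    · linear_combination (-(A 0 1 : ZMod (2 * N))) * ha
    · linear_combination hdet - (A 1 1 : ZMod (2 * N)) * ha
  have hA : A = A * T ^ (-A 0 1) * T ^ A 0 1 := by group
  rw [hA, hT]
  exact mul_mem (hΓ hΓA) (hsq _ (T_zpow_mem_Gamma1 N m))

theorem mem_of_mem_Gamma1 (hN : 2 ∣ N) (hΓ : Gamma (2 * N) ≤ H)
    (hsq : ∀ A ∈ Gamma1 N, A ^ 2 ∈ H) {A : SL(2, ℤ)} (hA : A ∈ Gamma1 N)
    (hb : (A 0 1 : ZMod 2) = 0) (hc : (A 1 0 : ZMod (2 * N)) = 0) : A ∈ H := by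
  obtain ⟨m, hm⟩ : 2 ∣ A 0 1 := by exact_mod_cast (ZMod.intCast_zmod_eq_zero_iff_dvd _ 2).mp hb
  obtain ⟨u, hu⟩ : (N : ℤ) ∣ A 0 0 - 1 :=
    ZMod.intCast_zmod_eq_one_iff_dvd.mp ((Gamma1_mem N A).mp hA).1
  have ha : (A 0 0 : ZMod (2 * N)) = 1 + N * u := by
    rw [show A 0 0 = 1 + N * u by linarith]
    push_cast
    ring
  have h2N : (2 * N : ZMod (2 * N)) = 0 := by exact_mod_cast ZMod.natCast_self (2 * N)
  obtain ⟨n, hn⟩ := hN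
  have hNN : (N * N : ZMod (2 * N)) = 0 := by
    have hn' : (N : ZMod (2 * N)) = 2 * n := by
      simpa using congrArg (Nat.cast : ℕ → ZMod (2 * N)) hn
    linear_combination (n : ZMod (2 * N)) * h2N + (N : ZMod (2 * N)) * hn'
  rcases Int.even_or_odd' u with ⟨t, rfl | rfl⟩
  · refine mem_of_top_left_eq_one hΓ hsq ?_ ⟨m, hm⟩ hc
    push_cast at ha
    linear_combination ha + (t : ZMod (2 * N)) * h2N
  · have hXA : rootMat N ^ 2 * A ∈ H := by
      refine mem_of_top_left_eq_one hΓ hsq ?_ ?_ ?_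
      all_goals simp only [sq, Matrix.SpecialLinearGroup.coe_mul]
      all_goals simp only [rootMat, mul_apply, Fin.sum_univ_two, of_apply, cons_val',
        cons_val_zero, cons_val_one, cons_val_fin_one]
      all_goals push_cast
      · push_cast at ha
        linear_combination (1 + N : ZMod (2 * N)) * ha + (2 + N : ZMod (2 * N)) * hc
          + (1 + t : ZMod (2 * N)) * h2N + (1 + 2 * t : ZMod (2 * N)) * hNN
      · exact ⟨(1 + N) * m + (1 + n) * A 1 1, by rw [hm, hn]; push_cast; ring⟩
      · linear_combination (A 0 0 : ZMod (2 * N)) * (h2N + hNN)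
          + (N + (1 + N) ^ 2 : ZMod (2 * N)) * hc
    simpa using mul_mem (inv_mem (hsq _ (rootMat_mem_Gamma1 N))) hXA

end

section

variable {N : ℕ} (hN : 2 ∣ N) (hN0 : N ≠ 0)
include hN hN0

theorem gamma1Parity_eq_one_iff {A : SL(2, ℤ)} (hA : A ∈ Gamma1 N) :
    gamma1Parity N hN hN0 ⟨A, hA⟩ = 1 ↔
      (A 0 1 : ZMod 2) = 0 ∧ (A 1 0 : ZMod (2 * N)) = 0 := by
  obtain ⟨x, hx⟩ := (ZMod.intCast_zmod_eq_zero_iff_dvd _ N).mp ((Gamma1_mem N A).mp hA).2.2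
  have hN0' : (N : ℤ) ≠ 0 := by exact_mod_cast hN0
  have hφ : gamma1Parity N hN hN0 ⟨A, hA⟩ = .ofAdd ((A 0 1 : ZMod 2), (x : ZMod 2)) := by
    simp [gamma1Parity, hx, Int.mul_ediv_cancel_left _ hN0']
  rw [hφ, ofAdd_eq_one, Prod.mk_eq_zero]
  refine Iff.and Iff.rfl ?_
  rw [hx, ZMod.intCast_zmod_eq_zero_iff_dvd, ZMod.intCast_zmod_eq_zero_iff_dvd]
  push_cast
  rw [mul_comm 2 (N : ℤ), mul_dvd_mul_iff_left hN0']

theorem Gamma_le_map_ker_gamma1Parity :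
    Gamma (2 * N) ≤ (gamma1Parity N hN hN0).ker.map (Gamma1 N).subtype := by
  intro A hA
  have hA1 := Gamma_le_Gamma1_of_dvd (dvd_mul_left N 2) hA
  obtain ⟨-, hb, hc, -⟩ := Gamma_mem.mp hA
  exact ⟨⟨A, hA1⟩, (gamma1Parity_eq_one_iff hN hN0 hA1).mpr
    ⟨ZMod.intCast_eq_zero_of_dvd (dvd_mul_right 2 N) hb, hc⟩, rfl⟩

theorem closure_eq_map_ker_gamma1Parity :
    Subgroup.closure ((Gamma (2 * N) : Set SL(2, ℤ)) ∪
      {x | (∃ A ∈ Gamma1 N, x = A ^ 2) ∨ ∃ A ∈ Gamma1 N, ∃ B ∈ Gamma1 N, x = A * B * A⁻¹ * B⁻¹}) =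
      (gamma1Parity N hN hN0).ker.map (Gamma1 N).subtype := by
  have hsq : ∀ q : Multiplicative (ZMod 2 × ZMod 2), q ^ 2 = 1 := by decide
  refine le_antisymm (Subgroup.closure_squares_commutators_le_map_ker hsq _
    (Gamma_le_map_ker_gamma1Parity hN hN0)) ?_
  rintro _ ⟨⟨A, hA⟩, hker, rfl⟩
  obtain ⟨hb, hc⟩ := (gamma1Parity_eq_one_iff hN hN0 hA).mp hker
  refine mem_of_mem_Gamma1 hN (fun A hA => ?_) (fun A hA => ?_) hA hb hc
  · exact Subgroup.subset_closure (Or.inl hA)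
  · exact Subgroup.subset_closure (Or.inr (Or.inl ⟨A, hA, rfl⟩))

end

end CongruenceSubgroup

lemma tauMat_mem_Gamma1 (N : ℕ) : tauMat ∈ Gamma1 N := by
  rw [Gamma1_mem]
  simp [tauMat]

lemma gammaMat_mem_Gamma1 (s : ℕ) : gammaMat s ∈ Gamma1 (2 ^ s) := by
  rw [Gamma1_mem]
  simp only [gammaMat, of_apply, cons_val', cons_val_zero, cons_val_one, cons_val_fin_one,
    Int.cast_one, Int.cast_pow, Int.cast_ofNat, true_and]
  exact_mod_cast ZMod.natCast_self (2 ^ s)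

lemma gamma1Parity_tauMat {N : ℕ} (hN : 2 ∣ N) (hN0 : N ≠ 0) :
    gamma1Parity N hN hN0 ⟨tauMat, tauMat_mem_Gamma1 N⟩ = .ofAdd (1, 0) := by
  simp [gamma1Parity, tauMat]

lemma gamma1Parity_gammaMat {s : ℕ} (hN : 2 ∣ 2 ^ s) (hN0 : 2 ^ s ≠ 0) :
    gamma1Parity (2 ^ s) hN hN0 ⟨gammaMat s, gammaMat_mem_Gamma1 s⟩ = .ofAdd (0, 1) := by
  simp [gamma1Parity, gammaMat]

/-- For `s ≥ 1`, the subgroup `H` of `Γ₁(2^s)` generated by `Γ(2^{s+1})` together with all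
squares and commutators of elements of `Γ₁(2^s)` has index 4 in `Γ₁(2^s)`, and `Γ₁(2^s)` is
generated by `H` together with `τ = [[1,1],[0,1]]` and `γ = [[1,0],[2^s,1]]`; i.e.
`V₂(Γ₁(2^s)/Γ(2^{s+1})) ≅ (ℤ/2ℤ)²` with basis the images of `τ` and `γ`. -/
theorem V2_Gamma1_two_pow (s : ℕ) (hs : 1 ≤ s) (H : Subgroup SL(2, ℤ))
    (hH : H = Subgroup.closure ((Gamma (2 ^ (s + 1)) : Set SL(2, ℤ)) ∪
      {x | (∃ A ∈ Gamma1 (2 ^ s), x = A ^ 2) ∨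
        ∃ A ∈ Gamma1 (2 ^ s), ∃ B ∈ Gamma1 (2 ^ s), x = A * B * A⁻¹ * B⁻¹})) :
    H.relIndex (Gamma1 (2 ^ s)) = 4 ∧
      Subgroup.closure ((H : Set SL(2, ℤ)) ∪ {tauMat, gammaMat s}) = Gamma1 (2 ^ s) := by
  have hN : 2 ∣ 2 ^ s := dvd_pow_self 2 (by omega)
  have hN0 : 2 ^ s ≠ 0 := by positivity
  set φ := gamma1Parity (2 ^ s) hN hN0
  set S : Set (Gamma1 (2 ^ s)) :=
    {⟨tauMat, tauMat_mem_Gamma1 _⟩, ⟨gammaMat s, gammaMat_mem_Gamma1 s⟩}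
  rw [pow_succ', closure_eq_map_ker_gamma1Parity hN hN0] at hH
  subst hH
  have hgen : Subgroup.closure (φ '' S) = ⊤ := by
    rw [Set.image_pair, gamma1Parity_tauMat, gamma1Parity_gammaMat]
    exact closure_ofAdd_zmod_two_basis_eq_top
  have hsurj : Function.Surjective φ := MonoidHom.range_eq_top.mp <| top_le_iff.mp <|
    hgen ▸ (Subgroup.closure_le _).mpr (Set.image_subset_range φ S)
  refine ⟨by rw [Subgroup.relIndex_map_subtype_ker hsurj, Nat.card_eq_fintype_card]; rfl, ?_⟩
  rw [show {tauMat, gammaMat s} = (Gamma1 (2 ^ s)).subtype '' S by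
    rw [Set.image_pair]; rfl]
  exact Subgroup.closure_map_subtype_ker_union_eq hgen
end

section
/- A finite étale cover of degree 2 is Galois (algebraic form): Let R be a nontrivial commutative ring in which 2 is invertible, and let A be a commutative R-algebra that is étale over R and finite locally free of rank 2 as an R-module. Then there exists an R-algebra automorphism σ : A → A such that σ ∘ σ = id, σ ≠ id, and the fixed subalgebra {a ∈ A : σ(a) = a} equals the image of R under the structure map R → A. -/
/-!
The involution is the standard involution `a ↦ tr a - a` of a quadratic algebra. As `A` is only
locally free, `tr` is computed from a finite dual basis `(fᵢ, gᵢ)` of the projective module `A`, as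
`tr L = ∑ gᵢ (L fᵢ)`. After localizing at a maximal ideal `A` becomes free of rank 2 and this is the
usual trace, so `tr 1 = 2` and the polarized Cayley–Hamilton identity
`x y + y x + (tr x tr y - tr (x y)) = tr x • y + tr y • x` hold locally, hence globally; the latter
says precisely that `a ↦ tr a - a` is multiplicative. A fixed point satisfies `2 a = tr a ∈ R`,
and the involution is not the identity because `R → A` is not surjective when `A` has rank 2.
-/

open Module

section DualBasis

variable {R M : Type*} [CommRing R] [AddCommGroup M] [Module R M] {ι : Type*} [Fintype ι]

/-- A dual basis in the sense of the dual basis lemma: one exists iff `M` is finite projective. -/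
def IsDualBasis (f : ι → M) (g : ι → Dual R M) : Prop :=
  ∀ x, ∑ i, g i x • f i = x

theorem exists_isDualBasis [Module.Finite R M] [Projective R M] :
    ∃ (n : ℕ) (f : Fin n → M) (g : Fin n → Dual R M), IsDualBasis f g := by
  obtain ⟨n, π, s, -, -, hπs⟩ := Module.Finite.exists_comp_eq_id_of_projective R M
  refine ⟨n, fun i => π (Pi.single i 1), fun i => LinearMap.proj i ∘ₗ s, fun x => ?_⟩
  conv_rhs => rw [← LinearMap.id_apply (R := R) x, ← hπs, LinearMap.comp_apply,
    ← Finset.univ_sum_single (s x)]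
  rw [map_sum]
  refine Finset.sum_congr rfl fun i _ => ?_
  rw [← map_smul, ← Pi.single_smul']
  simp

/-- Unlike `LinearMap.trace`, which is `0` on modules that are not free, this is the correct trace
on a finite projective module. -/
def dualTrace (f : ι → M) (g : ι → Dual R M) : End R M →ₗ[R] R :=
  ∑ i, g i ∘ₗ LinearMap.applyₗ (f i)

@[simp]
theorem dualTrace_apply (f : ι → M) (g : ι → Dual R M) (L : End R M) :
    dualTrace f g L = ∑ i, g i (L (f i)) := by
  simp [dualTrace]

variable {f : ι → M} {g : ι → Dual R M}

theorem IsDualBasis.dualTrace_eq_trace [Free R M] [Module.Finite R M] (h : IsDualBasis f g)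
    (L : End R M) : dualTrace f g L = LinearMap.trace R M L := by
  have hL : L = ∑ i, dualTensorHom R M M (g i ⊗ₜ L (f i)) := by
    ext x
    conv_lhs => rw [← h x]
    simp
  conv_rhs => rw [hL]
  simp

section Localization

variable {Rₛ : Type*} [CommRing Rₛ] [Algebra R Rₛ]
  {Mₛ : Type*} [AddCommGroup Mₛ] [Module R Mₛ] [Module Rₛ Mₛ] [IsScalarTower R Rₛ Mₛ]
  (l : M →ₗ[R] Mₛ)

theorem IsDualBasis.localization (h : IsDualBasis f g) (S : Submonoid R) [IsLocalization S Rₛ]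
    [IsLocalizedModule S l] :
    IsDualBasis (R := Rₛ) (l ∘ f)
      (fun i => IsLocalizedModule.mapExtendScalars S l (Algebra.linearMap R Rₛ) Rₛ (g i)) := by
  have hcomp : (∑ i, (IsLocalizedModule.mapExtendScalars S l (Algebra.linearMap R Rₛ) Rₛ
      (g i)).smulRight (l (f i))).restrictScalars R = LinearMap.id := by
    refine IsLocalizedModule.linearMap_ext S l l ?_
    ext m
    simp only [LinearMap.coe_comp, LinearMap.coe_restrictScalars, LinearMap.coe_sum,
      LinearMap.coe_smulRight, IsLocalizedModule.mapExtendScalars_apply_apply, Function.comp_apply,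
      Finset.sum_apply, IsLocalizedModule.map_apply, Algebra.linearMap_apply, algebraMap_smul,
      LinearMap.id_comp]
    simp_rw [← map_smul, ← map_sum, h m]
  intro x
  simpa using LinearMap.congr_fun hcomp x

theorem IsDualBasis.trace_localization (h : IsDualBasis f g) (S : Submonoid R)
    [IsLocalization S Rₛ] [IsLocalizedModule S l] [Free Rₛ Mₛ] [Module.Finite Rₛ Mₛ]
    {L : End R M} {L' : End Rₛ Mₛ} (hL : ∀ m, L' (l m) = l (L m)) :
    LinearMap.trace Rₛ Mₛ L' = algebraMap R Rₛ (dualTrace f g L) := by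
  rw [← IsDualBasis.dualTrace_eq_trace (h.localization (Rₛ := Rₛ) l S)]
  simp [hL]

end Localization

end DualBasis

theorem Matrix.polarized_cayleyHamilton_fin_two {R : Type*} [CommRing R]
    (M N : Matrix (Fin 2) (Fin 2) R) :
    M * N + N * M + (M.trace * N.trace - (M * N).trace) • 1 = M.trace • N + N.trace • M := by
  ext i j
  fin_cases i <;> fin_cases j <;>
    simp [Matrix.mul_apply, Matrix.trace, Fin.sum_univ_two] <;> ring

theorem LinearMap.polarized_cayleyHamilton_of_finrank_eq_two {R M : Type*} [CommRing R]
    [Nontrivial R] [AddCommGroup M] [Module R M] [Free R M] [Module.Finite R M]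
    (hM : finrank R M = 2) (L₁ L₂ : End R M) :
    L₁ * L₂ + L₂ * L₁ + (trace R M L₁ * trace R M L₂ - trace R M (L₁ * L₂)) • 1 =
      trace R M L₁ • L₂ + trace R M L₂ • L₁ := by
  let b := Module.finBasisOfFinrankEq R M hM
  apply (LinearMap.toMatrixAlgEquiv b).injective
  have htr (L : End R M) : trace R M L = (toMatrixAlgEquiv b L).trace :=
    trace_eq_matrix_trace R b L
  simpa [htr] using
    Matrix.polarized_cayleyHamilton_fin_two (toMatrixAlgEquiv b L₁) (toMatrixAlgEquiv b L₂)

section LocalGlobal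

variable {R M : Type*} [CommRing R] [AddCommGroup M] [Module R M] [Module.Finite R M]
  [Projective R M] {ι : Type*} [Fintype ι] {f : ι → M} {g : ι → Dual R M}

theorem IsDualBasis.dualTrace_id (h : IsDualBasis f g) {n : ℕ}
    (hn : ∀ (P : Ideal R) [P.IsMaximal],
      finrank (Localization.AtPrime P) (LocalizedModule P.primeCompl M) = n) :
    dualTrace f g LinearMap.id = n := by
  refine Module.eq_of_localization_maximal (fun P _ => Localization.AtPrime P)
    (fun P _ => Algebra.linearMap R (Localization.AtPrime P)) _ _ fun P _ => ?_
  have : Free (Localization.AtPrime P) (LocalizedModule P.primeCompl M) :=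
    free_of_flat_of_isLocalRing
  simp only [Algebra.linearMap_apply, map_natCast]
  rw [← h.trace_localization
    (LocalizedModule.mkLinearMap P.primeCompl M) P.primeCompl (L' := LinearMap.id) (fun _ => rfl),
    LinearMap.trace_id, hn P]

theorem IsDualBasis.polarized_cayleyHamilton (h : IsDualBasis f g)
    (h2 : ∀ (P : Ideal R) [P.IsMaximal],
      finrank (Localization.AtPrime P) (LocalizedModule P.primeCompl M) = 2)
    (L₁ L₂ : End R M) (m : M) :
    L₁ (L₂ m) + L₂ (L₁ m) + (dualTrace f g L₁ * dualTrace f g L₂ - dualTrace f g (L₁ * L₂)) • m =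
      dualTrace f g L₁ • L₂ m + dualTrace f g L₂ • L₁ m := by
  refine Module.eq_of_localization_maximal (fun (P : Ideal R) _ => LocalizedModule P.primeCompl M)
    (fun P _ => LocalizedModule.mkLinearMap P.primeCompl M) _ _ fun P _ => ?_
  let Rₚ := Localization.AtPrime P
  let Mₚ := LocalizedModule P.primeCompl M
  let l := LocalizedModule.mkLinearMap P.primeCompl M
  have : Free Rₚ Mₚ := free_of_flat_of_isLocalRing
  let localize (L : End R M) : End Rₚ Mₚ :=
    IsLocalizedModule.mapExtendScalars P.primeCompl l l Rₚ L
  have hloc (L : End R M) (m : M) : localize L (l m) = l (L m) := by simp [localize]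
  have htr (L : End R M) : LinearMap.trace Rₚ Mₚ (localize L) = algebraMap R Rₚ (dualTrace f g L) :=
    h.trace_localization l P.primeCompl (hloc L)
  have htr₁₂ : LinearMap.trace Rₚ Mₚ (localize L₁ * localize L₂) =
      algebraMap R Rₚ (dualTrace f g (L₁ * L₂)) :=
    h.trace_localization l P.primeCompl (fun m => by simp [hloc])
  have key := LinearMap.congr_fun
    (LinearMap.polarized_cayleyHamilton_of_finrank_eq_two (h2 P) (localize L₁) (localize L₂)) (l m)
  rw [htr, htr, htr₁₂] at key
  simp only [LinearMap.add_apply, Module.End.mul_apply, LinearMap.smul_apply, Module.End.one_apply,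
    hloc, ← map_mul, ← map_sub, algebraMap_smul Rₚ] at key
  simpa only [map_add, map_smul] using key

end LocalGlobal

section StandardInvolution

variable {R A : Type*} [CommRing R] [CommRing A] [Algebra R A] (t : A →ₗ[R] R)

theorem map_algebraMap_of_map_one_eq_two (ht1 : t 1 = 2) (r : R) :
    t (algebraMap R A r) = 2 * r := by
  rw [Algebra.algebraMap_eq_smul_one, map_smul, ht1, smul_eq_mul, mul_comm]

variable (ht1 : t 1 = 2)
  (ht : ∀ x y, x * y + y * x + (t x * t y - t (x * y)) • (1 : A) = t x • y + t y • x)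

def standardInvolutionHom : A →ₐ[R] A where
  toFun a := algebraMap R A (t a) - a
  map_one' := by rw [ht1, map_ofNat]; norm_num
  map_mul' x y := by
    have h := ht x y
    simp only [Algebra.smul_def, map_sub, map_mul, mul_one] at h
    linear_combination -h
  map_zero' := by simp
  map_add' x y := by simp only [map_add]; ring
  commutes' r := by
    simp only [map_algebraMap_of_map_one_eq_two t ht1, map_mul, map_ofNat]; ring

theorem standardInvolutionHom_apply (a : A) :
    standardInvolutionHom t ht1 ht a = algebraMap R A (t a) - a :=
  rfl

theorem standardInvolutionHom_comp_self :
    (standardInvolutionHom t ht1 ht).comp (standardInvolutionHom t ht1 ht) = AlgHom.id R A := by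
  ext a
  simp only [AlgHom.comp_apply, standardInvolutionHom_apply, map_sub,
    map_algebraMap_of_map_one_eq_two t ht1, map_mul, map_ofNat, AlgHom.id_apply]
  ring

def standardInvolution : A ≃ₐ[R] A :=
  AlgEquiv.ofAlgHom _ _ (standardInvolutionHom_comp_self t ht1 ht)
    (standardInvolutionHom_comp_self t ht1 ht)

theorem standardInvolution_apply (a : A) :
    standardInvolution t ht1 ht a = algebraMap R A (t a) - a :=
  rfl

theorem standardInvolution_involutive : Function.Involutive (standardInvolution t ht1 ht) :=
  AlgHom.congr_fun (standardInvolutionHom_comp_self t ht1 ht)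

theorem setOf_standardInvolution_eq_self (h2 : IsUnit (2 : R)) :
    {a | standardInvolution t ht1 ht a = a} = Set.range (algebraMap R A) := by
  ext a
  refine ⟨fun ha => ⟨h2.unit⁻¹ * t a, ?_⟩, ?_⟩
  · have h2a : algebraMap R A (t a) = 2 * a := by
      rw [two_mul, ← sub_eq_iff_eq_add, ← standardInvolution_apply t ht1 ht, ha]
    rw [map_mul, h2a, ← mul_assoc, ← map_ofNat (algebraMap R A), ← map_mul, IsUnit.val_inv_mul,
      map_one, one_mul]
  · rintro ⟨r, rfl⟩
    exact AlgEquiv.commutes _ r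

end StandardInvolution

theorem not_surjective_algebraMap_of_one_lt_finrank {R A : Type*} [CommRing R] [CommRing A]
    [Algebra R A] [Module.Finite R A] [Module.Flat R A] (P : Ideal R) [P.IsPrime]
    (hP : 1 < finrank (Localization.AtPrime P) (LocalizedModule P.primeCompl A)) :
    ¬ Function.Surjective (algebraMap R A) := fun hsurj =>
  (Module.rankAtStalk_le_one_iff_surjective.mpr hsurj ⟨P, ‹_›⟩).not_gt hP

universe u

theorem etale_rank_two_is_galois_general (R A : Type u) [CommRing R] [Nontrivial R] [CommRing A]
    [Algebra R A] (h2 : IsUnit (2 : R))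
    [Module.Finite R A] [Module.Projective R A]
    (hrank : ∀ (P : Ideal R) (_ : P.IsPrime),
      Module.rank (Localization.AtPrime P) (LocalizedModule P.primeCompl A) = 2) :
    ∃ σ : A ≃ₐ[R] A, (∀ a : A, σ (σ a) = a) ∧ σ ≠ AlgEquiv.refl ∧
      {a : A | σ a = a} = Set.range (algebraMap R A) := by
  have hrank₂ (P : Ideal R) [P.IsPrime] :
      finrank (Localization.AtPrime P) (LocalizedModule P.primeCompl A) = 2 :=
    finrank_eq_of_rank_eq (hrank P ‹_›)
  obtain ⟨n, f, g, hfg⟩ := exists_isDualBasis (R := R) (M := A)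
  let t : A →ₗ[R] R := dualTrace f g ∘ₗ (Algebra.lmul R A).toLinearMap
  have ht1 : t 1 = 2 := by simpa [t] using hfg.dualTrace_id fun P _ => hrank₂ P
  have ht x y : x * y + y * x + (t x * t y - t (x * y)) • (1 : A) = t x • y + t y • x := by
    simpa [t, mul_assoc] using hfg.polarized_cayleyHamilton (fun P _ => hrank₂ P)
      (Algebra.lmul R A x) (Algebra.lmul R A y) 1
  have hfix := setOf_standardInvolution_eq_self t ht1 ht h2
  refine ⟨standardInvolution t ht1 ht, standardInvolution_involutive t ht1 ht, fun hσ => ?_, hfix⟩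
  obtain ⟨P, hP⟩ := Ideal.exists_maximal R
  refine not_surjective_algebraMap_of_one_lt_finrank P (by rw [hrank₂]; norm_num) ?_
  rw [← Set.range_eq_univ, ← hfix, hσ]
  exact Set.eq_univ_of_forall fun _ => rfl

/-- A finite étale cover of degree 2 is Galois (algebraic form): if `2` is invertible in a
nontrivial commutative ring `R` and `A` is an étale `R`-algebra that is finite locally free of
rank 2 as an `R`-module, then `A` has an `R`-algebra involution `σ ≠ id` whose fixed subring
is exactly the image of `R`. -/
theorem etale_rank_two_is_galois (R A : Type u) [CommRing R] [Nontrivial R] [CommRing A]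
    [Algebra R A] (h2 : IsUnit (2 : R))
    [Algebra.Etale R A] [Module.Finite R A] [Module.Projective R A]
    (hrank : ∀ (P : Ideal R) (_ : P.IsPrime),
      Module.rank (Localization.AtPrime P) (LocalizedModule P.primeCompl A) = 2) :
    ∃ σ : A ≃ₐ[R] A, (∀ a : A, σ (σ a) = a) ∧ σ ≠ AlgEquiv.refl ∧
      {a : A | σ a = a} = Set.range (algebraMap R A) :=
  etale_rank_two_is_galois_general R A h2 hrank
end
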